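/- For every weighted finite graph G and each natural number 1 ≤ k ≤ N, λ_{N−k+1} ≥ 2·h̄*(k). -/

import Mathlib

/-!
For a sub-bipartition `P` and coefficients `c`, the test function
`g = ∑ᵢ cᵢ (1_{V_{2i-1}} - 1_{V_{2i}})` has `(g, g)_μ = ∑ᵢ cᵢ² vol(V_{2i-1} ∪ V_{2i})`, while
`(g, Δg)_μ = ½ ∑_{u,v} w(u,v) (g u - g v)²` picks up `4cᵢ²` on every edge between `V_{2i-1}` and
`V_{2i}` and `cᵢ²` on every edge from `V_{2i-1} ∪ V_{2i}` to `V*`. Hence the Rayleigh quotient of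
every nonzero `g` is at least twice the minimum defining `h̄*(k)`. The functions `g` form a
`k`-dimensional space, so one of them is `μ`-orthogonal to the `k - 1` eigenfunctions above
`λ_{N-k+1}`, and its Rayleigh quotient is at most `λ_{N-k+1}`.
-/

open Finset

namespace DualCheeger

variable {N : ℕ}

/-- The degree of a vertex `u`: `d_u = ∑_v w u v`. -/
def degree (w : Fin N → Fin N → ℝ) (u : Fin N) : ℝ := ∑ v, w u v

/-- A weighted finite graph structure on `Fin N`: symmetric nonnegative weights,
no self-loops, and strictly positive degrees. -/
def IsWeightedGraph (w : Fin N → Fin N → ℝ) : Prop :=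
  (∀ u v, w u v = w v u) ∧ (∀ u v, 0 ≤ w u v) ∧ (∀ u, w u u = 0) ∧
    ∀ u, 0 < degree w u

/-- `|E(A,B)| = ∑_{u ∈ A} ∑_{v ∈ B} w u v`. -/
def Ew (w : Fin N → Fin N → ℝ) (A B : Finset (Fin N)) : ℝ :=
  ∑ u ∈ A, ∑ v ∈ B, w u v

/-- `vol(A) = ∑_{u ∈ A} d_u`. -/
def vol (w : Fin N → Fin N → ℝ) (A : Finset (Fin N)) : ℝ := ∑ u ∈ A, degree w u

/-- The expansion `φ(S) = |E(S, Sᶜ)| / vol(S)`. -/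
noncomputable def expansion (w : Fin N → Fin N → ℝ) (S : Finset (Fin N)) : ℝ :=
  Ew w S Sᶜ / vol w S

/-- `φ̄(V₁,V₂) = 2|E(V₁,V₂)| / vol(V₁ ∪ V₂)`. -/
noncomputable def phibar (w : Fin N → Fin N → ℝ) (V₁ V₂ : Finset (Fin N)) : ℝ :=
  2 * Ew w V₁ V₂ / vol w (V₁ ∪ V₂)

/-- A `k`-subpartition: `k` nonempty pairwise disjoint subsets. -/
def IsSubpartition (k : ℕ) (P : Fin k → Finset (Fin N)) : Prop :=
  (∀ i, (P i).Nonempty) ∧ ∀ i j, i ≠ j → Disjoint (P i) (P j)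

/-- The `k`-way Cheeger constant `h(k)`. -/
noncomputable def cheeger (w : Fin N → Fin N → ℝ) (k : ℕ) : ℝ :=
  sInf { x | ∃ P : Fin k → Finset (Fin N), IsSubpartition k P ∧
    x = ⨆ i, expansion w (P i) }

/-- A `k`-sub-bipartition: `k` pairs of subsets, all `2k` subsets pairwise
disjoint, with each union `V_{2i-1} ∪ V_{2i}` nonempty. -/
def IsSubBipartition (k : ℕ) (P : Fin k → Finset (Fin N) × Finset (Fin N)) : Prop :=
  (∀ i, Disjoint (P i).1 (P i).2) ∧
    (∀ i j, i ≠ j → Disjoint ((P i).1 ∪ (P i).2) ((P j).1 ∪ (P j).2)) ∧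
    ∀ i, ((P i).1 ∪ (P i).2).Nonempty

/-- The `k`-way dual Cheeger constant `h̄(k)`. -/
noncomputable def dualCheeger (w : Fin N → Fin N → ℝ) (k : ℕ) : ℝ :=
  sSup { x | ∃ P : Fin k → Finset (Fin N) × Finset (Fin N), IsSubBipartition k P ∧
    x = ⨅ i, phibar w (P i).1 (P i).2 }

/-- `lam` enumerates the eigenvalues of the normalized Laplacian
`Δ f (u) = f u - d_u⁻¹ ∑_v w u v * f v` in nondecreasing order with multiplicity,
witnessed by a `μ`-orthonormal eigenbasis `f`. -/
def IsLapEigenbasis (w : Fin N → Fin N → ℝ) (lam : Fin N → ℝ)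
    (f : Fin N → Fin N → ℝ) : Prop :=
  Monotone lam ∧
    (∀ i j, (∑ u, degree w u * f i u * f j u) = if i = j then (1 : ℝ) else 0) ∧
    ∀ i u, f i u - (degree w u)⁻¹ * ∑ v, w u v * f i v = lam i * f i u

/-- The dual Rayleigh quotient of a function `f : V → ℝ`. -/
noncomputable def dualRayleigh (w : Fin N → Fin N → ℝ) (f : Fin N → ℝ) : ℝ :=
  (1 / 2 * ∑ u, ∑ v, w u v * (f u + f v) ^ 2) / ∑ u, degree w u * f u ^ 2

/-- The dual Rayleigh quotient of a map `F : V → ℝ^k`. -/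
noncomputable def dualRayleighVec (w : Fin N → Fin N → ℝ) {k : ℕ}
    (F : Fin N → EuclideanSpace ℝ (Fin k)) : ℝ :=
  (1 / 2 * ∑ u, ∑ v, w u v * ‖F u + F v‖ ^ 2) / ∑ u, degree w u * ‖F u‖ ^ 2

/-- The rough projective-space distance `d̄_F` between (the projections of)
`F u` and `F v`. -/
noncomputable def dbar {k : ℕ} (F : Fin N → EuclideanSpace ℝ (Fin k))
    (u v : Fin N) : ℝ :=
  min ‖‖F u‖⁻¹ • F u - ‖F v‖⁻¹ • F v‖ ‖‖F u‖⁻¹ • F u + ‖F v‖⁻¹ • F v‖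

/-- The `l²` mass of `F` on `S`: `ℰ_S = ∑_{u ∈ S} d_u ‖F u‖²`. -/
noncomputable def mass (w : Fin N → Fin N → ℝ) {k : ℕ}
    (F : Fin N → EuclideanSpace ℝ (Fin k)) (S : Finset (Fin N)) : ℝ :=
  ∑ u ∈ S, degree w u * ‖F u‖ ^ 2

/-- The distance `d̄_F(v, T)` from a vertex to a set. -/
noncomputable def dbarSet {k : ℕ} (F : Fin N → EuclideanSpace ℝ (Fin k))
    (v : Fin N) (T : Set (Fin N)) : ℝ :=
  sInf { x | ∃ t ∈ T, x = dbar F v t }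

/-- The modified dual Cheeger constant `h̄*(k)`. -/
noncomputable def dualCheegerStar (w : Fin N → Fin N → ℝ) (k : ℕ) : ℝ :=
  sSup { x | ∃ P : Fin k → Finset (Fin N) × Finset (Fin N), IsSubBipartition k P ∧
    x = ⨅ i, (2 * Ew w (P i).1 (P i).2 + 1 / 2 * Ew w ((P i).1 ∪ (P i).2)
        (Finset.univ \ Finset.univ.biUnion (fun j => (P j).1 ∪ (P j).2))) /
      vol w ((P i).1 ∪ (P i).2) }

/-- `G` is bipartite: `V = A ∪ Aᶜ` with no edges inside `A` nor inside `Aᶜ`. -/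
def IsBipartite (w : Fin N → Fin N → ℝ) : Prop :=
  ∃ A : Finset (Fin N), (∀ u ∈ A, ∀ v ∈ A, w u v = 0) ∧
    ∀ u ∈ Aᶜ, ∀ v ∈ Aᶜ, w u v = 0

/-- The equivalence relation generated by adjacency (connected components). -/
def Reach (w : Fin N → Fin N → ℝ) : Fin N → Fin N → Prop :=
  Relation.EqvGen fun u v => 0 < w u v

/-- `w` is the weight function of a weighted cycle on `Fin N`: symmetric,
nonnegative, and positive exactly on consecutive vertices mod `N`. -/
def IsCycleWeight (N : ℕ) (w : Fin N → Fin N → ℝ) : Prop :=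
  (∀ u v, w u v = w v u) ∧ (∀ u v, 0 ≤ w u v) ∧
    ∀ i j : Fin N, 0 < w i j ↔ ((i.val + 1) % N = j.val ∨ (j.val + 1) % N = i.val)

/-- The unweighted cycle on `Fin N`. -/
noncomputable def cycleWeight (N : ℕ) : Fin N → Fin N → ℝ := fun i j =>
  if (i.val + 1) % N = j.val ∨ (j.val + 1) % N = i.val then 1 else 0

lemma exists_ne_zero_forall_sum_mul_eq_zero {K ι : Type*} [Field K] [Fintype ι] {k : ℕ}
    (a : ι → Fin k → K) (h : Fintype.card ι < k) :
    ∃ c : Fin k → K, c ≠ 0 ∧ ∀ m, ∑ i, a m i * c i = 0 := by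
  obtain ⟨c, hc, hc0⟩ := Submodule.exists_mem_ne_zero_of_ne_bot
    (LinearMap.ker_ne_bot_of_finrank_lt (f := (Matrix.of a).mulVecLin) (by simpa using h))
  exact ⟨c, hc0, fun m => congrFun (LinearMap.mem_ker.mp hc) m⟩

def muInner (w : Fin N → Fin N → ℝ) (g h : Fin N → ℝ) : ℝ :=
  ∑ u, degree w u * g u * h u

noncomputable def normalizedLaplacian (w : Fin N → Fin N → ℝ) (g : Fin N → ℝ) :
    Fin N → ℝ :=
  fun u => g u - (degree w u)⁻¹ * ∑ v, w u v * g v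

section MuInner

variable {w : Fin N → Fin N → ℝ}

lemma muInner_comm (g h : Fin N → ℝ) : muInner w g h = muInner w h g :=
  Finset.sum_congr rfl fun u _ => by ring

lemma muInner_smul_right (g h : Fin N → ℝ) (a : ℝ) :
    muInner w g (fun u => a * h u) = a * muInner w g h := by
  rw [muInner, muInner, Finset.mul_sum]
  exact Finset.sum_congr rfl fun u _ => by ring

lemma muInner_sum_mul_left {ι : Type*} [Fintype ι]
    (φ : ι → Fin N → ℝ) (c : ι → ℝ) (h : Fin N → ℝ) :
    muInner w (fun u => ∑ i, c i * φ i u) h = ∑ i, muInner w (φ i) h * c i := by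
  simp only [muInner, Finset.mul_sum, Finset.sum_mul]
  rw [Finset.sum_comm]
  exact Finset.sum_congr rfl fun i _ => Finset.sum_congr rfl fun u _ => by ring

lemma muInner_normalizedLaplacian (hd : ∀ u, degree w u ≠ 0) (g h : Fin N → ℝ) :
    muInner w g (normalizedLaplacian w h)
      = muInner w g h - ∑ u, ∑ v, w u v * g u * h v := by
  rw [muInner, muInner, ← Finset.sum_sub_distrib]
  refine Finset.sum_congr rfl fun u _ => ?_
  calc degree w u * g u * (h u - (degree w u)⁻¹ * ∑ v, w u v * h v)
      = degree w u * g u * h u - g u * ∑ v, w u v * h v := by field_simp [hd u]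
    _ = _ := by
      rw [Finset.mul_sum]
      exact congrArg _ (Finset.sum_congr rfl fun v _ => by ring)

lemma muInner_normalizedLaplacian_comm (hsym : ∀ u v, w u v = w v u)
    (hd : ∀ u, degree w u ≠ 0) (g h : Fin N → ℝ) :
    muInner w (normalizedLaplacian w g) h = muInner w g (normalizedLaplacian w h) := by
  rw [muInner_comm, muInner_normalizedLaplacian hd, muInner_normalizedLaplacian hd,
    muInner_comm, Finset.sum_comm]
  congr 1
  exact Finset.sum_congr rfl fun u _ => Finset.sum_congr rfl fun v _ => by rw [hsym]; ring

lemma muInner_normalizedLaplacian_self (hsym : ∀ u v, w u v = w v u)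
    (hd : ∀ u, degree w u ≠ 0) (g : Fin N → ℝ) :
    muInner w g (normalizedLaplacian w g) = 1 / 2 * ∑ u, ∑ v, w u v * (g u - g v) ^ 2 := by
  have hdeg : ∀ h : Fin N → ℝ, ∑ u, ∑ v, w u v * h u ^ 2 = muInner w h h := fun h =>
    Finset.sum_congr rfl fun u _ => by rw [← Finset.sum_mul, degree]; ring
  have hdeg' : ∑ u, ∑ v, w u v * g v ^ 2 = muInner w g g := by
    rw [Finset.sum_comm, ← hdeg]
    exact Finset.sum_congr rfl fun u _ => Finset.sum_congr rfl fun v _ => by rw [hsym]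
  have hexpand : ∑ u, ∑ v, w u v * (g u - g v) ^ 2 = ∑ u, ∑ v, w u v * g u ^ 2
      + ∑ u, ∑ v, w u v * g v ^ 2 - 2 * ∑ u, ∑ v, w u v * g u * g v := by
    simp only [Finset.mul_sum, ← Finset.sum_add_distrib, ← Finset.sum_sub_distrib]
    exact Finset.sum_congr rfl fun u _ => Finset.sum_congr rfl fun v _ => by ring
  rw [muInner_normalizedLaplacian hd, hexpand, hdeg, hdeg']
  ring

end MuInner

section Eigenbasis

variable {w : Fin N → Fin N → ℝ} {lam : Fin N → ℝ} {f : Fin N → Fin N → ℝ}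

lemma IsLapEigenbasis.normalizedLaplacian_eq (hl : IsLapEigenbasis w lam f) (m : Fin N) :
    normalizedLaplacian w (f m) = fun u => lam m * f m u :=
  funext (hl.2.2 m)

-- Completeness: `F D Fᵀ = 1` for the square matrix `F` of the eigenbasis forces `Fᵀ F D = 1`.
lemma IsLapEigenbasis.degree_mul_sum_mul (hl : IsLapEigenbasis w lam f) (u v : Fin N) :
    degree w v * ∑ m, f m u * f m v = if u = v then 1 else 0 := by
  have hright : Matrix.of f * Matrix.diagonal (degree w) * (Matrix.of f).transpose = 1 := by
    ext m j
    rw [Matrix.mul_apply, Matrix.one_apply, ← hl.2.1 m j]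
    simp only [Matrix.mul_diagonal, Matrix.transpose_apply, Matrix.of_apply]
    exact Finset.sum_congr rfl fun u _ => by ring
  have hleft := Matrix.ext_iff.mpr (mul_eq_one_comm.mp hright) u v
  rw [Matrix.mul_apply, Matrix.one_apply] at hleft
  simp only [Matrix.mul_diagonal, Matrix.transpose_apply, Matrix.of_apply] at hleft
  rw [← hleft, Finset.mul_sum]
  exact Finset.sum_congr rfl fun m _ => by ring

lemma IsLapEigenbasis.sum_muInner_mul_muInner (hl : IsLapEigenbasis w lam f)
    (g h : Fin N → ℝ) :
    ∑ m, muInner w g (f m) * muInner w h (f m) = muInner w g h := by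
  simp only [muInner, Finset.sum_mul_sum]
  rw [Finset.sum_comm]
  refine Finset.sum_congr rfl fun u _ => ?_
  rw [Finset.sum_comm]
  have hcoeff : ∀ v, ∑ m, degree w u * g u * f m u * (degree w v * h v * f m v)
      = degree w u * g u * h v * (degree w v * ∑ m, f m u * f m v) := fun v => by
    rw [Finset.mul_sum, Finset.mul_sum]
    exact Finset.sum_congr rfl fun m _ => by ring
  simp only [hcoeff, hl.degree_mul_sum_mul, mul_ite, mul_one, mul_zero, Finset.sum_ite_eq,
    Finset.mem_univ, if_true]

lemma IsLapEigenbasis.muInner_normalizedLaplacian_eq (hl : IsLapEigenbasis w lam f)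
    (hsym : ∀ u v, w u v = w v u) (hd : ∀ u, degree w u ≠ 0) (g : Fin N → ℝ) :
    muInner w g (normalizedLaplacian w g) = ∑ m, lam m * muInner w g (f m) ^ 2 := by
  rw [← hl.sum_muInner_mul_muInner]
  refine Finset.sum_congr rfl fun m _ => ?_
  rw [muInner_normalizedLaplacian_comm hsym hd, hl.normalizedLaplacian_eq,
    muInner_smul_right]
  ring

lemma IsLapEigenbasis.eigenvalue_nonneg (hl : IsLapEigenbasis w lam f)
    (hsym : ∀ u v, w u v = w v u) (hnn : ∀ u v, 0 ≤ w u v) (hd : ∀ u, degree w u ≠ 0)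
    (m : Fin N) : 0 ≤ lam m := by
  have h := muInner_normalizedLaplacian_self hsym hd (f m)
  rw [hl.normalizedLaplacian_eq, muInner_smul_right, show muInner w (f m) (f m) = 1 by
    simp [muInner, hl.2.1]] at h
  rw [← mul_one (lam m), h]
  have := Finset.sum_nonneg fun u (_ : u ∈ univ) => Finset.sum_nonneg fun v (_ : v ∈ univ) =>
    mul_nonneg (hnn u v) (sq_nonneg (f m u - f m v))
  positivity

lemma IsLapEigenbasis.muInner_normalizedLaplacian_le (hl : IsLapEigenbasis w lam f)
    (hsym : ∀ u v, w u v = w v u) (hd : ∀ u, degree w u ≠ 0) {j : Fin N} {g : Fin N → ℝ}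
    (hg : ∀ m, j < m → muInner w g (f m) = 0) :
    muInner w g (normalizedLaplacian w g) ≤ lam j * muInner w g g := by
  rw [hl.muInner_normalizedLaplacian_eq hsym hd, ← hl.sum_muInner_mul_muInner,
    Finset.mul_sum]
  refine Finset.sum_le_sum fun m _ => ?_
  rcases lt_or_ge j m with hjm | hmj
  · simp [hg m hjm]
  · rw [← sq]
    exact mul_le_mul_of_nonneg_right (hl.1 hmj) (sq_nonneg _)

end Eigenbasis

section EdgeWeight

variable {F w : Fin N → Fin N → ℝ}

lemma Ew_comm (hF : ∀ u v, F u v = F v u) (A B : Finset (Fin N)) : Ew F A B = Ew F B A := by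
  rw [Ew, Ew, Finset.sum_comm]
  exact Finset.sum_congr rfl fun u _ => Finset.sum_congr rfl fun v _ => hF v u

lemma Ew_union_left {A B : Finset (Fin N)} (h : Disjoint A B) (C : Finset (Fin N)) :
    Ew F (A ∪ B) C = Ew F A C + Ew F B C :=
  Finset.sum_union h

lemma Ew_union_right {B C : Finset (Fin N)} (h : Disjoint B C) (A : Finset (Fin N)) :
    Ew F A (B ∪ C) = Ew F A B + Ew F A C := by
  rw [Ew, Ew, Ew, ← Finset.sum_add_distrib]
  exact Finset.sum_congr rfl fun u _ => Finset.sum_union h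

lemma Ew_biUnion_left {k : ℕ} {U : Fin k → Finset (Fin N)}
    (hU : ∀ i j, i ≠ j → Disjoint (U i) (U j)) (C : Finset (Fin N)) :
    Ew F (univ.biUnion U) C = ∑ i, Ew F (U i) C :=
  Finset.sum_biUnion fun i _ j _ hij => hU i j hij

lemma Ew_mono_right (hF : ∀ u v, 0 ≤ F u v) (A : Finset (Fin N)) {B C : Finset (Fin N)}
    (h : B ⊆ C) : Ew F A B ≤ Ew F A C :=
  Finset.sum_le_sum fun u _ => Finset.sum_le_sum_of_subset_of_nonneg h fun v _ _ => hF u v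

lemma vol_pos (hd : ∀ u, 0 < degree w u) {A : Finset (Fin N)} (hA : A.Nonempty) :
    0 < vol w A :=
  Finset.sum_pos (fun u _ => hd u) hA

lemma Ew_eq_mul {A B : Finset (Fin N)} {a : ℝ}
    (h : ∀ u ∈ A, ∀ v ∈ B, F u v = a * w u v) : Ew F A B = a * Ew w A B := by
  rw [Ew, Ew, Finset.mul_sum]
  refine Finset.sum_congr rfl fun u hu => ?_
  rw [Finset.mul_sum]
  exact Finset.sum_congr rfl fun v hv => h u hu v hv

/-- Counting each `E(Uᵢ, Uᵢ)` once and each `E(Uᵢ, S)` from both of its ends. -/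
lemma sum_Ew_add_two_mul_Ew_le (hsym : ∀ u v, F u v = F v u) (hnn : ∀ u v, 0 ≤ F u v)
    {k : ℕ} {U : Fin k → Finset (Fin N)} (hU : ∀ i j, i ≠ j → Disjoint (U i) (U j)) :
    ∑ i, (Ew F (U i) (U i) + 2 * Ew F (U i) (univ \ univ.biUnion U))
      ≤ ∑ u, ∑ v, F u v := by
  set S := univ \ univ.biUnion U
  have hUS : ∀ i, Disjoint (U i) S := fun i =>
    Finset.disjoint_sdiff.mono_left (Finset.subset_biUnion_of_mem U (Finset.mem_univ i))
  have hcovered : ∑ i, (Ew F (U i) (U i) + Ew F (U i) S) ≤ Ew F (univ.biUnion U) univ := by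
    rw [Ew_biUnion_left hU]
    refine Finset.sum_le_sum fun i _ => ?_
    rw [← Ew_union_right (hUS i)]
    exact Ew_mono_right hnn _ (Finset.subset_univ _)
  have huncovered : ∑ i, Ew F (U i) S ≤ Ew F S univ := calc
    ∑ i, Ew F (U i) S = Ew F (univ.biUnion U) S := (Ew_biUnion_left hU S).symm
    _ = Ew F S (univ.biUnion U) := Ew_comm hsym _ _
    _ ≤ Ew F S univ := Ew_mono_right hnn _ (Finset.subset_univ _)
  have hsplit : Ew F S univ + Ew F (univ.biUnion U) univ = ∑ u, ∑ v, F u v :=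
    Finset.sum_sdiff (Finset.subset_univ _)
  rw [← hsplit]
  simp only [two_mul, ← add_assoc, Finset.sum_add_distrib] at hcovered ⊢
  linarith

end EdgeWeight

def signIndicator (A B : Finset (Fin N)) (u : Fin N) : ℝ :=
  (if u ∈ A then 1 else 0) - if u ∈ B then 1 else 0

def bipartitionFun {k : ℕ} (P : Fin k → Finset (Fin N) × Finset (Fin N)) (c : Fin k → ℝ)
    (u : Fin N) : ℝ :=
  ∑ i, c i * signIndicator (P i).1 (P i).2 u

section BipartitionFun

variable {k : ℕ} {P : Fin k → Finset (Fin N) × Finset (Fin N)} {w : Fin N → Fin N → ℝ}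

lemma bipartitionFun_eq_of_mem (hP : IsSubBipartition k P) (c : Fin k → ℝ) {i : Fin k}
    {u : Fin N} (hu : u ∈ (P i).1 ∪ (P i).2) :
    bipartitionFun P c u = c i * signIndicator (P i).1 (P i).2 u := by
  refine Finset.sum_eq_single i (fun j _ hji => ?_) (by simp)
  have hu' := Finset.mem_union.not.mp (Finset.disjoint_left.mp (hP.2.1 i j hji.symm) hu)
  simp [signIndicator, not_or.mp hu']

lemma bipartitionFun_of_mem_fst (hP : IsSubBipartition k P) (c : Fin k → ℝ) {i : Fin k}
    {u : Fin N} (hu : u ∈ (P i).1) : bipartitionFun P c u = c i := by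
  rw [bipartitionFun_eq_of_mem hP c (Finset.mem_union_left _ hu)]
  simp [signIndicator, hu, Finset.disjoint_left.mp (hP.1 i) hu]

lemma bipartitionFun_of_mem_snd (hP : IsSubBipartition k P) (c : Fin k → ℝ) {i : Fin k}
    {u : Fin N} (hu : u ∈ (P i).2) : bipartitionFun P c u = -c i := by
  rw [bipartitionFun_eq_of_mem hP c (Finset.mem_union_right _ hu)]
  simp [signIndicator, hu, Finset.disjoint_right.mp (hP.1 i) hu]

lemma bipartitionFun_sq_of_mem (hP : IsSubBipartition k P) (c : Fin k → ℝ) {i : Fin k}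
    {u : Fin N} (hu : u ∈ (P i).1 ∪ (P i).2) : bipartitionFun P c u ^ 2 = c i ^ 2 := by
  rcases Finset.mem_union.mp hu with hu | hu
  · rw [bipartitionFun_of_mem_fst hP c hu]
  · rw [bipartitionFun_of_mem_snd hP c hu, neg_sq]

lemma bipartitionFun_of_mem_uncovered (c : Fin k → ℝ) {u : Fin N}
    (hu : u ∈ univ \ univ.biUnion fun j => (P j).1 ∪ (P j).2) : bipartitionFun P c u = 0 := by
  refine Finset.sum_eq_zero fun j _ => ?_
  have hu' := Finset.mem_union.not.mp fun h =>
    (Finset.mem_sdiff.mp hu).2 (Finset.mem_biUnion.mpr ⟨j, Finset.mem_univ j, h⟩)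
  simp [signIndicator, not_or.mp hu']

lemma muInner_bipartitionFun_self (hP : IsSubBipartition k P) (c : Fin k → ℝ) :
    muInner w (bipartitionFun P c) (bipartitionFun P c)
      = ∑ i, c i ^ 2 * vol w ((P i).1 ∪ (P i).2) := by
  have hzero : ∀ u ∈ univ, u ∉ univ.biUnion (fun j => (P j).1 ∪ (P j).2) →
      degree w u * bipartitionFun P c u * bipartitionFun P c u = 0 := fun u hu hu' => by
    rw [bipartitionFun_of_mem_uncovered c (Finset.mem_sdiff.mpr ⟨hu, hu'⟩), mul_zero]
  rw [muInner, ← Finset.sum_subset (Finset.subset_univ _) hzero,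
    Finset.sum_biUnion fun i _ j _ hij => hP.2.1 i j hij]
  refine Finset.sum_congr rfl fun i _ => ?_
  rw [vol, Finset.mul_sum]
  refine Finset.sum_congr rfl fun u hu => ?_
  rw [mul_assoc, ← sq, bipartitionFun_sq_of_mem hP c hu, mul_comm]

lemma muInner_bipartitionFun_self_pos (hd : ∀ u, 0 < degree w u) (hP : IsSubBipartition k P)
    {c : Fin k → ℝ} (hc : c ≠ 0) :
    0 < muInner w (bipartitionFun P c) (bipartitionFun P c) := by
  rw [muInner_bipartitionFun_self hP]
  obtain ⟨i, hi⟩ := Function.ne_iff.mp hc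
  exact Finset.sum_pos' (fun i _ => mul_nonneg (sq_nonneg _) (vol_pos hd (hP.2.2 i)).le)
    ⟨i, Finset.mem_univ i, mul_pos (sq_pos_of_ne_zero hi) (vol_pos hd (hP.2.2 i))⟩

lemma sum_sq_mul_le_dirichlet (hsym : ∀ u v, w u v = w v u) (hnn : ∀ u v, 0 ≤ w u v)
    (hP : IsSubBipartition k P) (c : Fin k → ℝ) :
    ∑ i, c i ^ 2 * (4 * Ew w (P i).1 (P i).2 + Ew w ((P i).1 ∪ (P i).2)
        (univ \ univ.biUnion fun j => (P j).1 ∪ (P j).2))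
      ≤ 1 / 2 * ∑ u, ∑ v, w u v * (bipartitionFun P c u - bipartitionFun P c v) ^ 2 := by
  set F : Fin N → Fin N → ℝ :=
    fun u v => w u v * (bipartitionFun P c u - bipartitionFun P c v) ^ 2 with hF
  have hFsym : ∀ u v, F u v = F v u := fun u v => by simp only [hF, hsym u v]; ring
  have hFnn : ∀ u v, 0 ≤ F u v := fun u v => mul_nonneg (hnn u v) (sq_nonneg _)
  refine le_trans ?_ (mul_le_mul_of_nonneg_left
    (sum_Ew_add_two_mul_Ew_le hFsym hFnn (U := fun j => (P j).1 ∪ (P j).2) hP.2.1)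
    (by norm_num))
  rw [Finset.mul_sum]
  refine Finset.sum_le_sum fun i _ => ?_
  have hcross : Ew F (P i).1 (P i).2 = 4 * c i ^ 2 * Ew w (P i).1 (P i).2 :=
    Ew_eq_mul fun u hu v hv => by
      simp only [hF, bipartitionFun_of_mem_fst hP c hu, bipartitionFun_of_mem_snd hP c hv]
      ring
  have hinside : Ew F (P i).1 (P i).2 + Ew F (P i).2 (P i).1
      ≤ Ew F ((P i).1 ∪ (P i).2) ((P i).1 ∪ (P i).2) := by
    rw [Ew_union_left (hP.1 i)]
    exact add_le_add (Ew_mono_right hFnn _ Finset.subset_union_right)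
      (Ew_mono_right hFnn _ Finset.subset_union_left)
  have hboundary : Ew F ((P i).1 ∪ (P i).2) (univ \ univ.biUnion fun j => (P j).1 ∪ (P j).2)
      = c i ^ 2 * Ew w ((P i).1 ∪ (P i).2) (univ \ univ.biUnion fun j => (P j).1 ∪ (P j).2) :=
    Ew_eq_mul fun u hu v hv => by
      simp only [hF, bipartitionFun_of_mem_uncovered c hv, sub_zero,
        bipartitionFun_sq_of_mem hP c hu]
      ring
  rw [Ew_comm hFsym (P i).2, hcross] at hinside
  rw [hboundary]
  linarith

lemma exists_bipartitionFun_orthogonal (P : Fin k → Finset (Fin N) × Finset (Fin N))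
    (f : Fin N → Fin N → ℝ) {j : Fin N} (hj : N ≤ j + k) :
    ∃ c ≠ 0, ∀ m, j < m → muInner w (bipartitionFun P c) (f m) = 0 := by
  have hcard : Fintype.card {m // j < m} < k := by
    rw [Fintype.card_subtype, Finset.filter_lt_eq_Ioi, Fin.card_Ioi]
    omega
  obtain ⟨c, hc0, hc⟩ := exists_ne_zero_forall_sum_mul_eq_zero
    (fun (m : {m // j < m}) i => muInner w (signIndicator (P i).1 (P i).2) (f m)) hcard
  exact ⟨c, hc0, fun m hm => (muInner_sum_mul_left _ c _).trans (hc ⟨m, hm⟩)⟩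

end BipartitionFun

noncomputable def dualCheegerStarOf (w : Fin N → Fin N → ℝ) {k : ℕ}
    (P : Fin k → Finset (Fin N) × Finset (Fin N)) : ℝ :=
  ⨅ i, (2 * Ew w (P i).1 (P i).2 + 1 / 2 * Ew w ((P i).1 ∪ (P i).2)
      (univ \ univ.biUnion fun j => (P j).1 ∪ (P j).2)) / vol w ((P i).1 ∪ (P i).2)

section SubBipartitionBound

variable {k : ℕ} {P : Fin k → Finset (Fin N) × Finset (Fin N)} {w : Fin N → Fin N → ℝ}

lemma two_mul_dualCheegerStarOf_mul_muInner_le (hsym : ∀ u v, w u v = w v u)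
    (hnn : ∀ u v, 0 ≤ w u v) (hd : ∀ u, 0 < degree w u) (hP : IsSubBipartition k P)
    (c : Fin k → ℝ) :
    2 * dualCheegerStarOf w P * muInner w (bipartitionFun P c) (bipartitionFun P c)
      ≤ muInner w (bipartitionFun P c) (normalizedLaplacian w (bipartitionFun P c)) := by
  have hr : ∀ i, dualCheegerStarOf w P * vol w ((P i).1 ∪ (P i).2)
      ≤ 2 * Ew w (P i).1 (P i).2 + 1 / 2 * Ew w ((P i).1 ∪ (P i).2)
        (univ \ univ.biUnion fun j => (P j).1 ∪ (P j).2) := fun i =>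
    (le_div_iff₀ (vol_pos hd (hP.2.2 i))).mp
      (ciInf_le (Set.finite_range _).bddBelow i)
  rw [muInner_normalizedLaplacian_self hsym fun u => (hd u).ne',
    muInner_bipartitionFun_self hP, Finset.mul_sum]
  refine le_trans (Finset.sum_le_sum fun i _ => ?_) (sum_sq_mul_le_dirichlet hsym hnn hP c)
  linarith [mul_le_mul_of_nonneg_left (hr i) (sq_nonneg (c i))]

theorem two_mul_dualCheegerStarOf_le_eigenvalue {lam : Fin N → ℝ} {f : Fin N → Fin N → ℝ}
    (hsym : ∀ u v, w u v = w v u) (hnn : ∀ u v, 0 ≤ w u v) (hd : ∀ u, 0 < degree w u)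
    (hl : IsLapEigenbasis w lam f) (hP : IsSubBipartition k P) {j : Fin N} (hj : N ≤ j + k) :
    2 * dualCheegerStarOf w P ≤ lam j := by
  obtain ⟨c, hc0, hc⟩ := exists_bipartitionFun_orthogonal (w := w) P f hj
  refine le_of_mul_le_mul_right ?_ (muInner_bipartitionFun_self_pos hd hP hc0)
  exact (two_mul_dualCheegerStarOf_mul_muInner_le hsym hnn hd hP c).trans
    (hl.muInner_normalizedLaplacian_le hsym (fun u => (hd u).ne') hc)

end SubBipartitionBound

/-- Theorem 4.1: `λ_{N-k+1} ≥ 2 h̄*(k)`. -/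
theorem eigenvalue_ge_two_dualCheegerStar {N : ℕ} (w : Fin N → Fin N → ℝ)
    (hG : IsWeightedGraph w) (k : ℕ) (hk : 1 ≤ k) (hkN : k ≤ N)
    (lam : Fin N → ℝ) (f : Fin N → Fin N → ℝ) (hl : IsLapEigenbasis w lam f) :
    2 * dualCheegerStar w k ≤ lam ⟨N - k, by omega⟩ := by
  obtain ⟨hsym, hnn, -, hd⟩ := hG
  have hlam := hl.eigenvalue_nonneg hsym hnn (fun u => (hd u).ne') ⟨N - k, by omega⟩
  rw [← le_div_iff₀' two_pos]
  refine Real.sSup_le ?_ (by positivity)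
  rintro x ⟨P, hP, rfl⟩
  rw [le_div_iff₀' two_pos]
  exact two_mul_dualCheegerStarOf_le_eigenvalue hsym hnn hd hl hP (by dsimp only; omega)

end DualCheeger
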